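/- arXiv:2605.27617 — 2 statements merged into one kernel-verified Lean document; each statement's English description precedes it below -/
import Mathlib

section
/- The word w = ⁅⁅x₁, x₂⁆, ⁅x₃, x₄⁆⁆ (the commutator of the commutators of the two pairs of generators) in the free group on four generators is a solution to the 1-out-of-4 picture-hanging puzzle of length 16, and every solution w' to the 1-out-of-4 puzzle has |w'| ≥ 16; hence the minimum length of a 1-out-of-4 solution is exactly 16. -/
/-!
Call `w` a one-out-of-`T` word if it is nontrivial, its reduced word uses only generators indexed
by `T`, and removing any single one of them kills it. For `|T| ≥ 2` every generator `xᵢ` of `T`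
occurs in the reduced word a positive and even number of times: removing some other generator of
`T` leaves the subword of `xᵢ^{±1}`-letters, which must reduce to `1`.

If `xᵢ` occurs exactly twice, the reduced word is `u x v x⁻¹ z` with `x = xᵢ^{±1}` and `u, v, z`
free of `xᵢ`. Removing `xᵢ` gives `uvz = 1`, so `w` is a conjugate of `⁅x, v⁆`; removing any other
generator `j` of `T` then makes the image of `v` commute with `x`, hence trivial, so `v` is a
one-out-of-`(T \ {i})` word, and `|v| = |(zu)⁻¹| ≤ |u| + |z|` gives `2|v| + 2 ≤ |w|`. Otherwise
every generator occurs at least four times and `|w| ≥ 4|T|`. Starting from `|w| ≥ 2|T|`, this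
yields the lower bounds `4, 10, 16` for `|T| = 2, 3, 4`.
-/

/-- The removal homomorphism: kills the generators with index in `S`. -/
def kill {n : ℕ} (S : Finset (Fin n)) : FreeGroup (Fin n) →* FreeGroup (Fin n) :=
  FreeGroup.lift fun i => if i ∈ S then 1 else FreeGroup.of i

/-- `w` is a solution to the `k`-out-of-`n` picture-hanging puzzle (Demaine convention). -/
def IsSolution {n : ℕ} (k : ℕ) (w : FreeGroup (Fin n)) : Prop :=
  ∀ S : Finset (Fin n),
    (k ≤ S.card → kill S w = 1) ∧ (S.card < k → kill S w ≠ 1)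

/-- The four generators of the free group `F₄`. -/
def x₁ : FreeGroup (Fin 4) := FreeGroup.of 0
def x₂ : FreeGroup (Fin 4) := FreeGroup.of 1
def x₃ : FreeGroup (Fin 4) := FreeGroup.of 2
def x₄ : FreeGroup (Fin 4) := FreeGroup.of 3

namespace FreeGroup

variable {α : Type*} [DecidableEq α] {L : List (α × Bool)}

theorem even_length_of_mk_eq_one (h : mk L = 1) : Even L.length := by
  obtain ⟨k, hk⟩ := (reduce.red : Red L (reduce L)).length
  rw [← toWord_mk, h, toWord_one] at hk
  exact ⟨k, by simp [hk]; omega⟩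

theorem IsReduced.toWord_mk (h : IsReduced L) : (mk L).toWord = L := by
  rw [FreeGroup.toWord_mk, h.reduce_eq]

theorem IsReduced.norm_mk (h : IsReduced L) : (mk L).norm = L.length := by
  rw [norm, h.toWord_mk]

theorem IsReduced.mk_ne_one (h : IsReduced L) (hL : L ≠ []) : mk L ≠ 1 := by
  rwa [ne_eq, ← toWord_eq_nil_iff, h.toWord_mk]

theorem IsReduced.two_mul_length_add_two_le {u v z : List (α × Bool)} {a a' : α × Bool}
    (h : IsReduced (u ++ a :: v ++ a' :: z)) (huvz : mk u * mk v * mk z = 1) :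
    2 * v.length + 2 ≤ (u ++ a :: v ++ a' :: z).length := by
  have hu : IsReduced u := h.infix ⟨[], a :: v ++ a' :: z, by simp⟩
  have hv : IsReduced v := h.infix ⟨u ++ [a], a' :: z, by simp⟩
  have hz : IsReduced z := h.infix ⟨u ++ a :: v ++ [a'], [], by simp⟩
  have hv_inv : (mk v)⁻¹ = mk z * mk u := by
    refine inv_eq_of_mul_eq_one_right ?_
    calc mk v * (mk z * mk u) = (mk u)⁻¹ * (mk u * mk v * mk z) * mk u := by group
      _ = 1 := by rw [huvz]; group
  have hv_le : (mk v).norm ≤ (mk z).norm + (mk u).norm := by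
    rw [← norm_inv_eq, hv_inv]
    exact norm_mul_le _ _
  rw [hu.norm_mk, hv.norm_mk, hz.norm_mk] at hv_le
  simp only [List.length_append, List.length_cons]
  omega

theorem eq_one_of_mul_comm_of_forall_ne {c : FreeGroup α} {a : α × Bool}
    (hc : ∀ b ∈ c.toWord, b.1 ≠ a.1) (h : mk [a] * c = c * mk [a]) : c = 1 := by
  rw [← mk_toWord (x := c), mul_mk, mul_mk, List.singleton_append] at h
  -- Both products are already reduced, so `a :: c.toWord = c.toWord ++ [a]`.
  have hleft : IsReduced (a :: c.toWord) := by
    rcases hL : c.toWord with _ | ⟨b, t⟩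
    · exact .singleton
    · rw [isReduced_cons_cons, ← hL]
      exact ⟨fun hab => absurd hab.symm (hc b (by simp [hL])), isReduced_toWord⟩
  have hright : IsReduced (c.toWord ++ [a]) :=
    List.isChain_append.mpr ⟨isReduced_toWord, .singleton _, fun b hb a' ha' hba => by
      obtain rfl : a = a' := by simpa using ha'
      exact absurd hba (hc b (List.mem_of_mem_getLast? hb))⟩
  have hwords := congrArg toWord h
  rw [hleft.toWord_mk, hright.toWord_mk] at hwords
  rcases hL : c.toWord with _ | ⟨b, t⟩
  · exact toWord_eq_nil_iff.mp hL
  · rw [hL, List.cons_append, List.cons.injEq] at hwords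
    exact absurd (congrArg Prod.fst hwords.1).symm (hc b (by simp [hL]))

end FreeGroup

theorem Commute.of_mul_mul_mul_inv_mul_eq_one {G : Type*} [Group G] {a x c d : G}
    (h : a * x * c * x⁻¹ * d = 1) (h' : a * c * d = 1) : Commute x c := by
  rw [eq_inv_of_mul_eq_one_right h'] at h
  rw [Commute, SemiconjBy, ← commutatorElement_eq_one_iff_mul_comm, commutatorElement_def]
  calc x * c * x⁻¹ * c⁻¹ = a⁻¹ * (a * x * c * x⁻¹ * (a * c)⁻¹) * a := by group
    _ = 1 := by rw [h]; group

theorem List.exists_eq_append_cons_of_countP_eq_succ {β : Type*} {p : β → Bool} {L : List β}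
    {k : ℕ} (h : L.countP p = k + 1) :
    ∃ u a t, L = u ++ a :: t ∧ p a ∧ (∀ b ∈ u, ¬ p b) ∧ t.countP p = k := by
  induction L with
  | nil => simp at h
  | cons x L ih =>
    by_cases hx : p x
    · exact ⟨[], x, L, rfl, hx, by simp, by simpa [hx] using h⟩
    · obtain ⟨u, a, t, rfl, ha, hu, ht⟩ := ih (by simpa [hx] using h)
      exact ⟨x :: u, a, t, rfl, ha, by simpa [hx] using hu, ht⟩

section Removal

open FreeGroup

variable {n : ℕ}

theorem kill_mk (S : Finset (Fin n)) (L : List (Fin n × Bool)) :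
    kill S (mk L) = mk (L.filter fun a => a.1 ∉ S) := by
  induction L with
  | nil => rfl
  | cons a L ih =>
    obtain ⟨i, b⟩ := a
    rw [← List.singleton_append, ← mul_mk, _root_.map_mul, ih, List.filter_append, ← mul_mk]
    congr 1
    rw [kill, lift_mk]
    by_cases hi : i ∈ S <;> cases b <;> simp [hi, of, inv_mk, invRev, one_eq_mk]

theorem kill_empty : kill (∅ : Finset (Fin n)) = MonoidHom.id _ :=
  ext_hom _ _ fun _ => by simp [kill]

theorem kill_comp_kill_singleton {S : Finset (Fin n)} {j : Fin n} (hj : j ∈ S) :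
    (kill S).comp (kill {j}) = kill S :=
  ext_hom _ _ fun i => by by_cases hi : i = j <;> simp [kill, hi, hj]

theorem kill_eq_one_of_mem {S : Finset (Fin n)} {j : Fin n} {w : FreeGroup (Fin n)}
    (hj : j ∈ S) (h : kill {j} w = 1) : kill S w = 1 := by
  rw [← kill_comp_kill_singleton hj, MonoidHom.comp_apply, h, _root_.map_one]

theorem kill_singleton_mk_of_forall_ne {i : Fin n} {L : List (Fin n × Bool)}
    (h : ∀ a ∈ L, a.1 ≠ i) : kill {i} (mk L) = mk L := by
  rw [kill_mk, List.filter_eq_self.mpr (by simpa using h)]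

theorem toWord_kill_mk_sublist (S : Finset (Fin n)) (L : List (Fin n × Bool)) :
    (kill S (mk L)).toWord.Sublist L := by
  rw [kill_mk, toWord_mk]
  exact reduce.red.sublist.trans List.filter_sublist

theorem isSolution_one_iff {w : FreeGroup (Fin n)} :
    IsSolution 1 w ↔ w ≠ 1 ∧ ∀ j, kill {j} w = 1 := by
  refine ⟨fun h => ⟨by simpa [kill_empty] using (h ∅).2, fun j => (h {j}).1 (by simp)⟩,
    fun ⟨hne, hkill⟩ S => ⟨fun hS => ?_, fun hS => ?_⟩⟩
  · obtain ⟨j, hj⟩ := Finset.card_pos.mp hS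
    exact kill_eq_one_of_mem hj (hkill j)
  · rw [Finset.card_eq_zero.mp (Nat.lt_one_iff.mp hS), kill_empty]
    exact hne

theorem kill_univ_erase_mk (i : Fin n) (L : List (Fin n × Bool)) :
    kill (Finset.univ.erase i) (mk L) = mk (L.filter (·.1 = i)) := by
  simp [kill_mk]

structure IsOneOutOf (T : Finset (Fin n)) (w : FreeGroup (Fin n)) : Prop where
  intro ::
  ne_one : w ≠ 1
  mem_of_mem_toWord : ∀ a ∈ w.toWord, a.1 ∈ T
  kill_singleton_eq_one : ∀ j ∈ T, kill {j} w = 1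

namespace IsOneOutOf

variable {T : Finset (Fin n)} {w : FreeGroup (Fin n)}

theorem mk_filter_toWord_eq_one (hw : IsOneOutOf T w) (hT : 2 ≤ T.card) (i : Fin n) :
    mk (w.toWord.filter (·.1 = i)) = 1 := by
  obtain ⟨j, hj, hji⟩ := Finset.exists_mem_ne hT i
  rw [← kill_univ_erase_mk, mk_toWord]
  exact kill_eq_one_of_mem (by simp [hji]) (hw.kill_singleton_eq_one j hj)

theorem even_countP (hw : IsOneOutOf T w) (hT : 2 ≤ T.card) (i : Fin n) :
    Even (w.toWord.countP (·.1 = i)) := by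
  rw [List.countP_eq_length_filter]
  exact even_length_of_mk_eq_one (hw.mk_filter_toWord_eq_one hT i)

theorem countP_ne_zero (hw : IsOneOutOf T w) {i : Fin n} (hi : i ∈ T) :
    w.toWord.countP (·.1 = i) ≠ 0 := fun h0 => by
  apply hw.ne_one
  rw [← hw.kill_singleton_eq_one i hi, ← mk_toWord (x := w), kill_singleton_mk_of_forall_ne]
  simpa using List.countP_eq_zero.mp h0

theorem sum_countP_eq_norm (hw : IsOneOutOf T w) :
    ∑ j ∈ T, w.toWord.countP (·.1 = j) = w.norm := by
  have := Multiset.sum_count_eq_card (s := T) (m := (w.toWord.map Prod.fst : Multiset (Fin n)))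
    fun j hj => by
      obtain ⟨a, ha, rfl⟩ := List.mem_map.mp (Multiset.mem_coe.mp hj)
      exact hw.mem_of_mem_toWord a ha
  rw [Multiset.coe_card, List.length_map] at this
  rw [FreeGroup.norm, ← this]
  refine Finset.sum_congr rfl fun j _ => ?_
  rw [Multiset.coe_count, List.count_eq_countP, List.countP_map]
  rfl

theorem exists_toWord_eq (hw : IsOneOutOf T w) (hT : 2 ≤ T.card) {i : Fin n}
    (h2 : w.toWord.countP (·.1 = i) = 2) :
    ∃ u b v z, w.toWord = u ++ (i, b) :: v ++ (i, !b) :: z ∧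
      (∀ a ∈ u, a.1 ≠ i) ∧ (∀ a ∈ v, a.1 ≠ i) ∧ ∀ a ∈ z, a.1 ≠ i := by
  obtain ⟨u, ⟨i₁, b⟩, t, hL, hi₁, hu, ht⟩ := List.exists_eq_append_cons_of_countP_eq_succ h2
  obtain ⟨v, ⟨i₂, b'⟩, z, rfl, hi₂, hv, hz⟩ := List.exists_eq_append_cons_of_countP_eq_succ ht
  simp only [decide_eq_true_eq] at hi₁ hi₂ hu hv
  subst i₁ i₂
  have hz' : ∀ a ∈ z, a.1 ≠ i := by simpa using List.countP_eq_zero.mp hz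
  refine ⟨u, b, v, z, ?_, hu, hv, hz'⟩
  -- Removing all generators but `xᵢ` leaves `[(i, b), (i, b')]`, which must reduce to `1`.
  have hpair := hw.mk_filter_toWord_eq_one hT i
  rw [hL, List.filter_append, List.filter_cons_of_pos (by simp), List.filter_append,
    List.filter_cons_of_pos (by simp), List.filter_eq_nil_iff.mpr (by simpa using hu),
    List.filter_eq_nil_iff.mpr (by simpa using hv),
    List.filter_eq_nil_iff.mpr (by simpa using hz')] at hpair
  obtain rfl : b' = !b := by
    by_contra hb
    refine IsReduced.mk_ne_one ?_ (List.cons_ne_nil _ _) hpair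
    revert hb; cases b <;> cases b' <;> simp [isReduced_cons_cons]
  simp [hL]

theorem exists_erase_of_countP_eq_two (hw : IsOneOutOf T w) (hT : 2 ≤ T.card) {i : Fin n}
    (hi : i ∈ T) (h2 : w.toWord.countP (·.1 = i) = 2) :
    ∃ V, IsOneOutOf (T.erase i) V ∧ 2 * V.norm + 2 ≤ w.norm := by
  obtain ⟨u, b, v, z, hL, hu, hv, hz⟩ := hw.exists_toWord_eq hT h2
  have hred : IsReduced (u ++ (i, b) :: v ++ (i, !b) :: z) := hL ▸ isReduced_toWord
  have hred_v : IsReduced v := hred.infix ⟨u ++ [(i, b)], (i, !b) :: z, by simp⟩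
  have hv_ne : v ≠ [] := by
    rintro rfl
    have := hred.infix ⟨u, z, by simp⟩ (L₁ := [(i, b), (i, !b)])
    simp [isReduced_cons_cons] at this
  set x : FreeGroup (Fin n) := mk [(i, b)]
  have hw_eq : w = mk u * x * mk v * x⁻¹ * mk z := by
    rw [← mk_toWord (x := w), hL, inv_mk]
    simp [x, mul_mk, invRev]
  have huvz : mk u * mk v * mk z = 1 := by
    have hkx : kill {i} x = 1 := by simp [x, kill_mk, one_eq_mk]
    simpa only [hw_eq, _root_.map_mul, _root_.map_inv, hkx, inv_one, mul_one,
      kill_singleton_mk_of_forall_ne hu, kill_singleton_mk_of_forall_ne hv,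
      kill_singleton_mk_of_forall_ne hz] using hw.kill_singleton_eq_one i hi
  refine ⟨mk v, ⟨hred_v.mk_ne_one hv_ne, fun a ha => ?_, fun j hj => ?_⟩, ?_⟩
  · rw [hred_v.toWord_mk] at ha
    exact Finset.mem_erase.mpr ⟨hv a ha, hw.mem_of_mem_toWord a (by simp [hL, ha])⟩
  · obtain ⟨hji, hjT⟩ := Finset.mem_erase.mp hj
    have hkx : kill {j} x = x := kill_singleton_mk_of_forall_ne (by simp [Ne.symm hji])
    have hconj := hw.kill_singleton_eq_one j hjT
    rw [hw_eq] at hconj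
    simp only [_root_.map_mul, _root_.map_inv, hkx] at hconj
    have hkill_uvz := congrArg (kill {j}) huvz
    simp only [_root_.map_mul, _root_.map_one] at hkill_uvz
    refine eq_one_of_mul_comm_of_forall_ne (a := (i, b)) (fun a ha => hv a ?_)
      (Commute.of_mul_mul_mul_inv_mul_eq_one hconj hkill_uvz)
    exact (toWord_kill_mk_sublist {j} v).subset ha
  · rw [hred_v.norm_mk, FreeGroup.norm, hL]
    exact hred.two_mul_length_add_two_le huvz

theorem countP_eq_two_or_four_le (hw : IsOneOutOf T w) (hT : 2 ≤ T.card) {i : Fin n}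
    (hi : i ∈ T) : w.toWord.countP (·.1 = i) = 2 ∨ 4 ≤ w.toWord.countP (·.1 = i) := by
  obtain ⟨k, hk⟩ := hw.even_countP hT i
  have := hw.countP_ne_zero hi
  omega

theorem card_mul_le_norm (hw : IsOneOutOf T w) {c : ℕ}
    (hc : ∀ i ∈ T, c ≤ w.toWord.countP (·.1 = i)) : T.card * c ≤ w.norm := by
  rw [← hw.sum_countP_eq_norm, ← smul_eq_mul, ← Finset.sum_const]
  exact Finset.sum_le_sum hc

theorem min_le_norm (hw : IsOneOutOf T w) (hT : 2 ≤ T.card) {m : ℕ}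
    (hm : ∀ i ∈ T, ∀ V, IsOneOutOf (T.erase i) V → m ≤ V.norm) :
    min (2 * m + 2) (T.card * 4) ≤ w.norm := by
  by_cases h2 : ∃ i ∈ T, w.toWord.countP (·.1 = i) = 2
  · obtain ⟨i, hi, h2⟩ := h2
    obtain ⟨V, hV, hle⟩ := hw.exists_erase_of_countP_eq_two hT hi h2
    have := hm i hi V hV
    omega
  · push Not at h2
    exact min_le_of_right_le <| hw.card_mul_le_norm fun i hi =>
      (hw.countP_eq_two_or_four_le hT hi).resolve_left (h2 i hi)

theorem four_le_norm_of_card_eq_two (hw : IsOneOutOf T w) (hT : T.card = 2) : 4 ≤ w.norm := by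
  have := hw.card_mul_le_norm (c := 2) fun i hi => by
    rcases hw.countP_eq_two_or_four_le hT.ge hi with h | h <;> omega
  omega

theorem ten_le_norm_of_card_eq_three (hw : IsOneOutOf T w) (hT : T.card = 3) : 10 ≤ w.norm := by
  have := hw.min_le_norm (m := 4) (by omega) fun i hi V hV =>
    hV.four_le_norm_of_card_eq_two (by rw [Finset.card_erase_of_mem hi, hT])
  omega

theorem sixteen_le_norm_of_card_eq_four (hw : IsOneOutOf T w) (hT : T.card = 4) :
    16 ≤ w.norm := by
  have := hw.min_le_norm (m := 10) (by omega) fun i hi V hV =>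
    hV.ten_le_norm_of_card_eq_three (by rw [Finset.card_erase_of_mem hi, hT])
  omega

end IsOneOutOf

end Removal

open scoped commutatorElement

theorem one_out_of_four_min_length :
    IsSolution 1 ⁅⁅x₁, x₂⁆, ⁅x₃, x₄⁆⁆ ∧ FreeGroup.norm ⁅⁅x₁, x₂⁆, ⁅x₃, x₄⁆⁆ = 16 ∧
    ∀ w' : FreeGroup (Fin 4), IsSolution 1 w' → 16 ≤ FreeGroup.norm w' := by
  have hnorm : FreeGroup.norm ⁅⁅x₁, x₂⁆, ⁅x₃, x₄⁆⁆ = 16 := by decide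
  refine ⟨isSolution_one_iff.mpr ⟨fun h => by simp [h] at hnorm, fun i => ?_⟩, hnorm,
    fun w' hw' => ?_⟩
  · fin_cases i <;>
      simp [commutatorElement_def, kill, x₁, x₂, x₃, x₄]
  · obtain ⟨hne, hkill⟩ := isSolution_one_iff.mp hw'
    exact IsOneOutOf.sixteen_le_norm_of_card_eq_four (T := Finset.univ)
      ⟨hne, fun a _ => Finset.mem_univ a.1, fun j _ => hkill j⟩ (by simp)
end

section
/- The word w = x₁ x₂ x₃ x₁⁻¹ x₂⁻¹ x₃⁻¹ x₄ x₂ x₁ x₂⁻¹ x₁⁻¹ x₃ x₁ x₂ x₃⁻¹ x₂⁻¹ x₁⁻¹ x₄⁻¹ in the free group on four generators x₁, x₂, x₃, x₄ is a solution to the 2-out-of-4 picture-hanging puzzle, and its length is 18. -/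
/-- The length-18 solution to the 2-out-of-4 puzzle found by one-step extension. -/
def w : FreeGroup (Fin 4) :=
  x₁ * x₂ * x₃ * x₁⁻¹ * x₂⁻¹ * x₃⁻¹ * x₄ * x₂ * x₁ * x₂⁻¹ * x₁⁻¹ * x₃ * x₁ * x₂ *
    x₃⁻¹ * x₂⁻¹ * x₁⁻¹ * x₄⁻¹

lemma kill_of {n : ℕ} (S : Finset (Fin n)) (i : Fin n) :
    kill S (FreeGroup.of i) = if i ∈ S then 1 else FreeGroup.of i :=
  FreeGroup.lift_apply_of

lemma kill_comp {n : ℕ} (S T : Finset (Fin n)) (x : FreeGroup (Fin n)) :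
    kill S (kill T x) = kill (S ∪ T) x := by
  have : (kill S).comp (kill T) = kill (S ∪ T) := by
    apply FreeGroup.ext_hom
    intro i
    simp only [MonoidHom.comp_apply, kill_of]
    by_cases hT : i ∈ T <;> by_cases hS : i ∈ S <;>
      simp [hT, hS, kill_of, Finset.mem_union]
  exact DFunLike.congr_fun this x

lemma p01 : kill {0,1} w = 1 := by
  simp only [w, x₁, x₂, x₃, x₄, map_mul, map_inv, kill_of]; norm_num; decide
lemma p02 : kill {0,2} w = 1 := by
  simp only [w, x₁, x₂, x₃, x₄, map_mul, map_inv, kill_of]; norm_num; decide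
lemma p03 : kill {0,3} w = 1 := by
  simp only [w, x₁, x₂, x₃, x₄, map_mul, map_inv, kill_of]; norm_num; decide
lemma p12 : kill {1,2} w = 1 := by
  simp only [w, x₁, x₂, x₃, x₄, map_mul, map_inv, kill_of]; norm_num; decide
lemma p13 : kill {1,3} w = 1 := by
  simp only [w, x₁, x₂, x₃, x₄, map_mul, map_inv, kill_of]; norm_num; decide
lemma p23 : kill {2,3} w = 1 := by
  simp only [w, x₁, x₂, x₃, x₄, map_mul, map_inv, kill_of]; norm_num; decide

lemma qe : kill ∅ w ≠ 1 := by
  simp only [w, x₁, x₂, x₃, x₄, map_mul, map_inv, kill_of]; norm_num; decide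
lemma q0 : kill {0} w ≠ 1 := by
  simp only [w, x₁, x₂, x₃, x₄, map_mul, map_inv, kill_of]; norm_num; decide
lemma q1 : kill {1} w ≠ 1 := by
  simp only [w, x₁, x₂, x₃, x₄, map_mul, map_inv, kill_of]; norm_num; decide
lemma q2 : kill {2} w ≠ 1 := by
  simp only [w, x₁, x₂, x₃, x₄, map_mul, map_inv, kill_of]; norm_num; decide
lemma q3 : kill {3} w ≠ 1 := by
  simp only [w, x₁, x₂, x₃, x₄, map_mul, map_inv, kill_of]; norm_num; decide

lemma kill_pair (i j : Fin 4) (hij : i ≠ j) : kill {i, j} w = 1 := by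
  fin_cases i <;> fin_cases j <;>
    first
      | exact absurd rfl hij
      | exact p01 | exact p02 | exact p03 | exact p12 | exact p13 | exact p23
      | (rw [Finset.pair_comm]
         first | exact p01 | exact p02 | exact p03 | exact p12 | exact p13 | exact p23)

lemma kill_small (S : Finset (Fin 4)) (h : S.card < 2) : kill S w ≠ 1 := by
  interval_cases h' : S.card
  · rw [Finset.card_eq_zero.mp h']; exact qe
  · obtain ⟨i, hi⟩ := Finset.card_eq_one.mp h'
    rw [hi]
    fin_cases i
    · exact q0
    · exact q1
    · exact q2
    · exact q3

theorem length18_solves_two_out_of_four : IsSolution 2 w ∧ FreeGroup.norm w = 18 := by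
  constructor
  · intro S
    refine ⟨fun h => ?_, kill_small S⟩
    obtain ⟨i, hi, j, hj, hij⟩ := Finset.one_lt_card.mp h
    have h1 : kill {i, j} w = 1 := kill_pair i j hij
    have h2 : kill S (kill {i, j} w) = kill (S ∪ {i, j}) w := kill_comp _ _ _
    have h3 : S ∪ {i, j} = S := by
      apply Finset.union_eq_left.mpr
      intro a ha
      rcases Finset.mem_insert.mp ha with rfl | ha
      · exact hi
      · exact (Finset.mem_singleton.mp ha) ▸ hj
    rw [h1, map_one, h3] at h2
    exact h2.symm
  · unfold w x₁ x₂ x₃ x₄; decide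
end
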